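/- Let n ≥ 1 be an integer, let H(a,b,c,d,n) = 16a²n⁴ + 64abn⁴ + 256b²n⁴ + 16c²n⁴ + 16d²n⁴ + 8adn³ − 64cdn³ + 8a²n² − 4abn² − 12acn² + 32b²n² + 24c²n² + 24d²n² + 6adn − 8an² − 16cdn + 8cn² + a² − ab − ac + b² + c² + d² − 8dn − 2a + 2c + 2, and let (a₀,b₀,c₀,d₀) be given by a₀ = (8n²+1)(256n⁴+32n²+1)/(6144n⁸+4864n⁶+920n⁴+58n²+1), b₀ = −(512n⁶+32n⁴−12n²−1)/(2(6144n⁸+4864n⁶+920n⁴+58n²+1)), c₀ = −(49152n¹⁰+59392n⁸+17088n⁶+1952n⁴+88n²+1)/(2(98304n¹²+28672n¹⁰−18048n⁸−1568n⁶+472n⁴+50n²+1)), d₀ = −n(32768n⁸+19456n⁶+3328n⁴+196n²+3)/((16n⁴−8n²+1)(6144n⁸+4864n⁶+920n⁴+58n²+1)). Then H(a₀,b₀,c₀,d₀,n) = (−4096n⁸ + 3584n⁶ + 1008n⁴ + 68n² + 1)/(12288n⁸ + 9728n⁶ + 1840n⁴ + 116n² + 2). -/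
import Mathlib


/-- The quadratic polynomial `H(a,b,c,d,n)` from the diagonal case. -/
def Hdiag (a b c d n : ℝ) : ℝ :=
  16 * a ^ 2 * n ^ 4 + 64 * a * b * n ^ 4 + 256 * b ^ 2 * n ^ 4 + 16 * c ^ 2 * n ^ 4 +
    16 * d ^ 2 * n ^ 4 + 8 * a * d * n ^ 3 - 64 * c * d * n ^ 3 + 8 * a ^ 2 * n ^ 2 -
    4 * a * b * n ^ 2 - 12 * a * c * n ^ 2 + 32 * b ^ 2 * n ^ 2 + 24 * c ^ 2 * n ^ 2 +
    24 * d ^ 2 * n ^ 2 + 6 * a * d * n - 8 * a * n ^ 2 - 16 * c * d * n + 8 * c * n ^ 2 +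
    a ^ 2 - a * b - a * c + b ^ 2 + c ^ 2 + d ^ 2 - 8 * d * n - 2 * a + 2 * c + 2

/-- The critical-point candidate `a₀`. -/
noncomputable def a₀ (n : ℝ) : ℝ :=
  (8 * n ^ 2 + 1) * (256 * n ^ 4 + 32 * n ^ 2 + 1) /
    (6144 * n ^ 8 + 4864 * n ^ 6 + 920 * n ^ 4 + 58 * n ^ 2 + 1)

/-- The critical-point candidate `b₀`. -/
noncomputable def b₀ (n : ℝ) : ℝ :=
  -(512 * n ^ 6 + 32 * n ^ 4 - 12 * n ^ 2 - 1) /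
    (2 * (6144 * n ^ 8 + 4864 * n ^ 6 + 920 * n ^ 4 + 58 * n ^ 2 + 1))

/-- The critical-point candidate `c₀`. -/
noncomputable def c₀ (n : ℝ) : ℝ :=
  -(49152 * n ^ 10 + 59392 * n ^ 8 + 17088 * n ^ 6 + 1952 * n ^ 4 + 88 * n ^ 2 + 1) /
    (2 * (98304 * n ^ 12 + 28672 * n ^ 10 - 18048 * n ^ 8 - 1568 * n ^ 6 +
      472 * n ^ 4 + 50 * n ^ 2 + 1))

/-- The critical-point candidate `d₀`. -/
noncomputable def d₀ (n : ℝ) : ℝ :=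
  -(n * (32768 * n ^ 8 + 19456 * n ^ 6 + 3328 * n ^ 4 + 196 * n ^ 2 + 3)) /
    ((16 * n ^ 4 - 8 * n ^ 2 + 1) *
      (6144 * n ^ 8 + 4864 * n ^ 6 + 920 * n ^ 4 + 58 * n ^ 2 + 1))

set_option maxHeartbeats 2000000 in
/-- Auxiliary: `Hdiag` of four fractions with a common denominator. -/
lemma Hdiag_div (A B C D E x : ℝ) (hE : E ≠ 0) :
    Hdiag (A / E) (B / E) (C / E) (D / E) x =
      (16 * A ^ 2 * x ^ 4 + 64 * A * B * x ^ 4 + 256 * B ^ 2 * x ^ 4 + 16 * C ^ 2 * x ^ 4 +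
        16 * D ^ 2 * x ^ 4 + 8 * A * D * x ^ 3 - 64 * C * D * x ^ 3 + 8 * A ^ 2 * x ^ 2 -
        4 * A * B * x ^ 2 - 12 * A * C * x ^ 2 + 32 * B ^ 2 * x ^ 2 + 24 * C ^ 2 * x ^ 2 +
        24 * D ^ 2 * x ^ 2 + 6 * A * D * x - 8 * A * x ^ 2 * E - 16 * C * D * x +
        8 * C * x ^ 2 * E + A ^ 2 - A * B - A * C + B ^ 2 + C ^ 2 + D ^ 2 - 8 * D * x * E -
        2 * A * E + 2 * C * E + 2 * E ^ 2) / E ^ 2 := by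
  unfold Hdiag
  field_simp

set_option maxHeartbeats 2000000 in
/-- The value of `H` at the critical point  `(a₀,b₀,c₀,d₀)`. -/
theorem Hdiag_min_value (n : ℕ) (hn : 1 ≤ n) :
    Hdiag (a₀ (n : ℝ)) (b₀ (n : ℝ)) (c₀ (n : ℝ)) (d₀ (n : ℝ)) (n : ℝ) =
      (-4096 * (n : ℝ) ^ 8 + 3584 * (n : ℝ) ^ 6 + 1008 * (n : ℝ) ^ 4 +
        68 * (n : ℝ) ^ 2 + 1) /
      (12288 * (n : ℝ) ^ 8 + 9728 * (n : ℝ) ^ 6 + 1840 * (n : ℝ) ^ 4 +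
        116 * (n : ℝ) ^ 2 + 2) := by
  have hx : (1:ℝ) ≤ (n:ℝ) := by exact_mod_cast hn
  set x : ℝ := (n:ℝ) with hxdef
  have hx2 : (1:ℝ) ≤ x ^ 2 := by nlinarith
  have hD1 : 6144 * x ^ 8 + 4864 * x ^ 6 + 920 * x ^ 4 + 58 * x ^ 2 + 1 ≠ 0 := by positivity
  have hQ : 16 * x ^ 4 - 8 * x ^ 2 + 1 ≠ 0 := by nlinarith [sq_nonneg (x ^ 2 - 1)]
  have hD2 : 2 * (98304 * x ^ 12 + 28672 * x ^ 10 - 18048 * x ^ 8 - 1568 * x ^ 6 +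
      472 * x ^ 4 + 50 * x ^ 2 + 1) ≠ 0 := by
    have h1 : x ^ 8 ≤ x ^ 12 := pow_le_pow_right₀ hx (by norm_num)
    have h2 : x ^ 6 ≤ x ^ 12 := pow_le_pow_right₀ hx (by norm_num)
    have h3 : (0:ℝ) ≤ x ^ 12 := by positivity
    have h4 : (0:ℝ) ≤ x ^ 10 := by positivity
    have h5 : (0:ℝ) ≤ x ^ 4 := by positivity
    have h6 : (0:ℝ) ≤ x ^ 2 := by positivity
    nlinarith
  have hD4 : 12288 * x ^ 8 + 9728 * x ^ 6 + 1840 * x ^ 4 + 116 * x ^ 2 + 2 ≠ 0 := by positivity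
  have hE : 2 * ((16 * x ^ 4 - 8 * x ^ 2 + 1) *
      (6144 * x ^ 8 + 4864 * x ^ 6 + 920 * x ^ 4 + 58 * x ^ 2 + 1)) ≠ 0 :=
    mul_ne_zero two_ne_zero (mul_ne_zero hQ hD1)
  have h2D1 : 2 * (6144 * x ^ 8 + 4864 * x ^ 6 + 920 * x ^ 4 + 58 * x ^ 2 + 1) ≠ 0 :=
    mul_ne_zero two_ne_zero hD1
  have hQD1 : (16 * x ^ 4 - 8 * x ^ 2 + 1) *
      (6144 * x ^ 8 + 4864 * x ^ 6 + 920 * x ^ 4 + 58 * x ^ 2 + 1) ≠ 0 :=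
    mul_ne_zero hQ hD1
  have ha : a₀ x = (2 * (16 * x ^ 4 - 8 * x ^ 2 + 1) * (8 * x ^ 2 + 1) *
      (256 * x ^ 4 + 32 * x ^ 2 + 1)) /
      (2 * ((16 * x ^ 4 - 8 * x ^ 2 + 1) *
        (6144 * x ^ 8 + 4864 * x ^ 6 + 920 * x ^ 4 + 58 * x ^ 2 + 1))) := by
    unfold a₀
    rw [div_eq_div_iff hD1 hE]
    ring
  have hb : b₀ x = (-((16 * x ^ 4 - 8 * x ^ 2 + 1) *
      (512 * x ^ 6 + 32 * x ^ 4 - 12 * x ^ 2 - 1))) /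
      (2 * ((16 * x ^ 4 - 8 * x ^ 2 + 1) *
        (6144 * x ^ 8 + 4864 * x ^ 6 + 920 * x ^ 4 + 58 * x ^ 2 + 1))) := by
    unfold b₀
    rw [div_eq_div_iff h2D1 hE]
    ring
  have hc : c₀ x = (-(49152 * x ^ 10 + 59392 * x ^ 8 + 17088 * x ^ 6 + 1952 * x ^ 4 +
      88 * x ^ 2 + 1)) /
      (2 * ((16 * x ^ 4 - 8 * x ^ 2 + 1) *
        (6144 * x ^ 8 + 4864 * x ^ 6 + 920 * x ^ 4 + 58 * x ^ 2 + 1))) := by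
    unfold c₀
    rw [div_eq_div_iff hD2 hE]
    ring
  have hd : d₀ x = (-(2 * x * (32768 * x ^ 8 + 19456 * x ^ 6 + 3328 * x ^ 4 +
      196 * x ^ 2 + 3))) /
      (2 * ((16 * x ^ 4 - 8 * x ^ 2 + 1) *
        (6144 * x ^ 8 + 4864 * x ^ 6 + 920 * x ^ 4 + 58 * x ^ 2 + 1))) := by
    unfold d₀
    rw [div_eq_div_iff hQD1 hE]
    ring
  rw [ha, hb, hc, hd, Hdiag_div _ _ _ _ _ _ hE]
  rw [div_eq_div_iff (pow_ne_zero 2 hE) hD4]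
  ring
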